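/- Let K be ℝ or ℂ and let L be the Lie algebra direct sum sl_2(K[λ]) ⊕ K³, where sl_2(K[λ]) is the Lie algebra of 2×2 trace-zero matrices over the polynomial ring K[λ] (regarded as a Lie algebra over K) and K³ is a 3-dimensional abelian Lie algebra. Then every Lie ideal I of L that is nilpotent as a Lie algebra satisfies dim_K I ≤ 3. Consequently, for every nilpotent ideal I of L, the quotient L/I is infinite-dimensional over K. -/
import Mathlib


noncomputable section

/-- The ambient space of the Lie algebra `sl₂(K[λ]) ⊕ K³`: pairs of a `2×2` matrix over
`K[λ]` and a vector in `K³`. -/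
abbrev M15 (K : Type*) [RCLike K] := Matrix (Fin 2) (Fin 2) (Polynomial K) × (Fin 3 → K)

/-- The componentwise bracket on `sl₂(K[λ]) ⊕ K³`: the matrix commutator on the first
component, and `0` on the (central, abelian) `K³` component. -/
def br15 (K : Type*) [RCLike K] (p q : M15 K) : M15 K := (p.1 * q.1 - q.1 * p.1, 0)

/-- The Lie algebra `L = sl₂(K[λ]) ⊕ K³` as a `K`-subspace of the ambient space:
the pairs whose matrix component has trace zero. -/
def L15 (K : Type*) [RCLike K] : Submodule K (M15 K) :=
  LinearMap.ker ((Matrix.traceLinearMap (Fin 2) K (Polynomial K)).comp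
    (LinearMap.fst K (Matrix (Fin 2) (Fin 2) (Polynomial K)) (Fin 3 → K)))

/-- The lower central series of a `K`-subspace `I` with respect to the bracket `br15`:
`C_0 = I`, `C_{j+1} = span_K {[x,y] | x ∈ I, y ∈ C_j}`. -/
def lcs15 (K : Type*) [RCLike K] (I : Submodule K (M15 K)) : ℕ → Submodule K (M15 K)
  | 0 => I
  | j + 1 => Submodule.span K
      {z : M15 K | ∃ x ∈ I, ∃ y ∈ lcs15 K I j, z = br15 K x y}

namespace Aux15

variable {K : Type*} [RCLike K]

lemma mem_L15_iff (z : M15 K) : z ∈ L15 K ↔ z.1 0 0 + z.1 1 1 = 0 := by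
  simp [L15, Matrix.trace_fin_two]

lemma mem_e : ((!![0,1;0,0], 0) : M15 K) ∈ L15 K := by simp [mem_L15_iff]
lemma mem_f : ((!![0,0;1,0], 0) : M15 K) ∈ L15 K := by simp [mem_L15_iff]


lemma chainb (w : M15 K) :
    br15 K (!![0,1;0,0], 0) (br15 K (!![0,1;0,0], 0) w)
      = (!![0, -(2 * w.1 1 0); 0, 0], 0) := by
  unfold br15
  refine Prod.ext ?_ rfl
  apply Matrix.ext
  intro i j
  fin_cases i <;> fin_cases j <;>
    simp [Matrix.sub_apply, Matrix.mul_apply, Matrix.vecMul, dotProduct,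
      Fin.sum_univ_two] <;> ring

lemma chainc (w : M15 K) :
    br15 K (!![0,1;0,0], 0) (br15 K (!![0,1;0,0], 0) (br15 K (!![0,0;1,0], 0) w))
      = (!![0, -(2 * (w.1 0 0 - w.1 1 1)); 0, 0], 0) := by
  unfold br15
  refine Prod.ext ?_ rfl
  apply Matrix.ext
  intro i j
  fin_cases i <;> fin_cases j <;>
    simp [Matrix.sub_apply, Matrix.mul_apply, Matrix.vecMul, dotProduct,
      Fin.sum_univ_two] <;> ring

lemma chaina (w : M15 K) :
    br15 K (!![0,1;0,0], 0) (br15 K (!![0,1;0,0], 0)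
        (br15 K (!![0,0;1,0], 0) (br15 K (!![0,0;1,0], 0) w)))
      = (!![0, 4 * w.1 0 1; 0, 0], 0) := by
  unfold br15
  refine Prod.ext ?_ rfl
  apply Matrix.ext
  intro i j
  fin_cases i <;> fin_cases j <;>
    simp [Matrix.sub_apply, Matrix.mul_apply, Matrix.vecMul, dotProduct,
      Fin.sum_univ_two] <;> ring

lemma chainf (p : Polynomial K) :
    br15 K (!![0,0;1,0], 0) ((!![0,p;0,0], 0) : M15 K) = (!![-p,0;0,p], 0) := by
  unfold br15
  refine Prod.ext ?_ rfl
  apply Matrix.ext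
  intro i j
  fin_cases i <;> fin_cases j <;>
    simp [Matrix.sub_apply, Matrix.mul_apply, Matrix.vecMul, dotProduct,
      Fin.sum_univ_two]

lemma chainh (p q : Polynomial K) :
    br15 K ((!![-p,0;0,p], 0) : M15 K) ((!![0,q;0,0], 0) : M15 K)
      = (!![0, -(2 * (p * q)); 0, 0], 0) := by
  unfold br15
  refine Prod.ext ?_ rfl
  apply Matrix.ext
  intro i j
  fin_cases i <;> fin_cases j <;>
    simp [Matrix.sub_apply, Matrix.mul_apply, Matrix.vecMul, dotProduct,
      Fin.sum_univ_two] <;> ring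

lemma two_ne_zero' : (2 : Polynomial K) ≠ 0 := by
  exact two_ne_zero

lemma fst_zero (I : Submodule K (M15 K))
    (hsub : I ≤ L15 K)
    (hideal : ∀ x ∈ L15 K, ∀ y ∈ I, br15 K x y ∈ I)
    (hnilp : ∃ j, lcs15 K I j = ⊥) :
    ∀ z ∈ I, z.1 = 0 := by
  intro z hz
  by_contra hne
  have htr : z.1 0 0 + z.1 1 1 = 0 := (mem_L15_iff _).1 (hsub hz)
  obtain ⟨p, hp, hpI⟩ : ∃ p : Polynomial K, p ≠ 0 ∧ ((!![0,p;0,0], 0) : M15 K) ∈ I := by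
    by_cases hb : z.1 1 0 = 0
    · by_cases ha : z.1 0 1 = 0
      · have hc : z.1 0 0 - z.1 1 1 ≠ 0 := by
          intro h0
          apply hne
          have h00 : z.1 0 0 = 0 := by
            have h2 : (2 : Polynomial K) * z.1 0 0 = 0 := by linear_combination htr + h0
            exact (mul_eq_zero.1 h2).resolve_left two_ne_zero'
          have h11 : z.1 1 1 = 0 := by linear_combination htr - h00
          rw [Matrix.eta_fin_two z.1, h00, h11, ha, hb]
          apply Matrix.ext
          intro i j
          fin_cases i <;> fin_cases j <;> simp
        refine ⟨-(2 * (z.1 0 0 - z.1 1 1)), neg_ne_zero.2 (mul_ne_zero two_ne_zero' hc), ?_⟩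
        have := hideal _ mem_e _ (hideal _ mem_e _ (hideal _ mem_f _ hz))
        rwa [chainc] at this
      · refine ⟨4 * z.1 0 1, mul_ne_zero (by
          have : (4 : Polynomial K) = 2 * 2 := by norm_num
          rw [this]; exact mul_ne_zero two_ne_zero' two_ne_zero') ha, ?_⟩
        have := hideal _ mem_e _ (hideal _ mem_e _ (hideal _ mem_f _ (hideal _ mem_f _ hz)))
        rwa [chaina] at this
    · refine ⟨-(2 * z.1 1 0), neg_ne_zero.2 (mul_ne_zero two_ne_zero' hb), ?_⟩
      have := hideal _ mem_e _ (hideal _ mem_e _ hz)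
      rwa [chainb] at this
  have hph : ((!![-p,0;0,p], 0) : M15 K) ∈ I := by
    have := hideal _ mem_f _ hpI
    rwa [chainf] at this
  have key : ∀ j, ∃ q : Polynomial K, q ≠ 0 ∧ ((!![0,q;0,0], 0) : M15 K) ∈ lcs15 K I j := by
    intro j
    induction j with
    | zero => exact ⟨p, hp, hpI⟩
    | succ j ih =>
      obtain ⟨q, hq, hqm⟩ := ih
      refine ⟨-(2 * (p * q)),
        neg_ne_zero.2 (mul_ne_zero two_ne_zero' (mul_ne_zero hp hq)), ?_⟩
      show _ ∈ lcs15 K I (j+1)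
      apply Submodule.subset_span
      exact ⟨_, hph, _, hqm, (chainh p q).symm⟩
  obtain ⟨j, hj⟩ := hnilp
  obtain ⟨q, hq, hqm⟩ := key j
  rw [hj, Submodule.mem_bot] at hqm
  apply hq
  have := congrArg (fun w : M15 K => w.1 0 1) hqm
  simpa using this

/-- Embedding of `K[λ]` into `L15 K`. -/
def psi : Polynomial K →ₗ[K] ↥(L15 K) where
  toFun p := ⟨(!![0,p;0,0], 0), by simp [mem_L15_iff]⟩
  map_add' p q := by
    apply Subtype.ext
    refine Prod.ext ?_ (by simp)
    show !![0,p+q;0,0] = !![0,p;0,0] + !![0,q;0,0]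
    apply Matrix.ext
    intro i j
    fin_cases i <;> fin_cases j <;> simp
  map_smul' k p := by
    apply Subtype.ext
    refine Prod.ext ?_ (by simp)
    show !![0, k • p;0,0] = k • !![0,p;0,0]
    apply Matrix.ext
    intro i j
    fin_cases i <;> fin_cases j <;> simp

lemma psi_inj : Function.Injective (psi (K := K)) := by
  intro p q hpq
  have := congrArg (fun w : ↥(L15 K) => (w : M15 K).1 0 1) hpq
  simpa [psi] using this

end Aux15

set_option synthInstance.maxHeartbeats 1000000 in
set_option maxHeartbeats 1000000 in
open Aux15 in
/-- every Lie ideal `I` of `L = sl₂(K[λ]) ⊕ K³` that is nilpotent as a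
Lie algebra has `dim_K I ≤ 3`; consequently `L/I` is infinite-dimensional over `K`. -/
theorem statement15 (K : Type*) [RCLike K] (I : Submodule K (M15 K))
    (hsub : I ≤ L15 K)
    (hideal : ∀ x ∈ L15 K, ∀ y ∈ I, br15 K x y ∈ I)
    (hnilp : ∃ j, lcs15 K I j = ⊥) :
    Module.rank K ↥I ≤ 3 ∧
      ¬ Module.Finite K (↥(L15 K) ⧸ (I.comap (L15 K).subtype)) := by
  have hfst := fst_zero I hsub hideal hnilp
  have hrank : Module.rank K ↥I ≤ 3 := by
    have hinj : Function.Injective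
        ((LinearMap.snd K (Matrix (Fin 2) (Fin 2) (Polynomial K)) (Fin 3 → K)).comp
          I.subtype) := by
      intro x y hxy
      apply Subtype.ext
      apply Prod.ext
      · rw [hfst _ x.2, hfst _ y.2]
      · exact hxy
    have := LinearMap.rank_le_of_injective _ hinj
    calc Module.rank K ↥I ≤ Module.rank K (Fin 3 → K) := this
      _ = 3 := by simpa using rank_fin_fun (R := K) 3
  refine ⟨hrank, ?_⟩
  intro hfin
  set I' := I.comap (L15 K).subtype with hI'
  have hrI' : Module.rank K ↥I' < Cardinal.aleph0 := by
    have hinj' : Function.Injective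
        ((((LinearMap.snd K (Matrix (Fin 2) (Fin 2) (Polynomial K)) (Fin 3 → K)).comp
          (L15 K).subtype)).comp I'.subtype) := by
      intro x y hxy
      apply Subtype.ext
      apply Subtype.ext
      apply Prod.ext
      · exact (hfst _ x.2).trans (hfst _ y.2).symm
      · exact hxy
    have h3 : Module.rank K ↥I' ≤ Module.rank K (Fin 3 → K) :=
      LinearMap.rank_le_of_injective _ hinj'
    refine lt_of_le_of_lt h3 ?_
    rw [rank_fin_fun]
    exact Cardinal.nat_lt_aleph0 3
  have hrq : Module.rank K (↥(L15 K) ⧸ I') < Cardinal.aleph0 := Module.rank_lt_aleph0 K _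
  have hL : Module.rank K ↥(L15 K) < Cardinal.aleph0 := by
    rw [← Submodule.rank_quotient_add_rank I']
    exact Cardinal.add_lt_aleph0 hrq hrI'
  have hP : Module.rank K (Polynomial K) < Cardinal.aleph0 :=
    lt_of_le_of_lt (LinearMap.rank_le_of_injective _ psi_inj) hL
  have : Module.Finite K (Polynomial K) := Module.rank_lt_aleph0_iff.1 hP
  exact Polynomial.not_finite this
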